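/- arXiv:1210.5235 — 2 statements merged into one kernel-verified Lean document; each statement's English description precedes it below -/
import Mathlib

section
/- The PR density update has an explicit product form: the Radon–Nikodym derivative dF_n/dF₀ (θ) equals ∏_{i=1}^n [(1−w_i) + w_i p_θ(Y_i)/p_{i−1}(Y_i)], where p_{i−1}(Y_i) = ∫ p_θ(Y_i) dF_{i−1}(θ). -/
open MeasureTheory ENNReal Finset

/-! Each PR step mixes `F n` with its reweighting by `g (n + 1)`, so if `F n` has density `P`
with respect to `F 0`, then `F (n + 1)` has density `P` times the factor
`(1 - w) + w g / ∫ g dF n`; induction on `n` multiplies up these factors. -/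

theorem MeasureTheory.Measure.smul_withDensity_add_smul_withDensity_withDensity
    {α : Type*} [MeasurableSpace α] (μ : Measure α) {P g : α → ℝ≥0∞}
    (hP : Measurable P) (hg : Measurable g) (a b : ℝ≥0∞) :
    a • μ.withDensity P + b • (μ.withDensity P).withDensity g
      = μ.withDensity (fun x => P x * (a + b * g x)) := by
  have hPg : Measurable (P * g) := hP.mul hg
  rw [← withDensity_mul μ hP hg, ← withDensity_smul a hP, ← withDensity_smul b hPg,
    ← withDensity_add_left (hP.const_smul a)]
  congr 1
  funext x
  simp only [Pi.add_apply, Pi.smul_apply, Pi.mul_apply, smul_eq_mul]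
  ring

theorem pr_product_form_general {Θ : Type*} [MeasurableSpace Θ]
    (F : ℕ → Measure Θ) (w : ℕ → ℝ) (g : ℕ → Θ → ℝ≥0∞)
    (hg : ∀ i, Measurable (g i))
    (hrec : ∀ i, F (i + 1)
      = (1 - ENNReal.ofReal (w (i + 1))) • F i
        + (ENNReal.ofReal (w (i + 1)) / ∫⁻ θ, g (i + 1) θ ∂(F i)) •
            (F i).withDensity (g (i + 1))) :
    ∀ n, F n = (F 0).withDensity (fun θ =>
      ∏ i ∈ Finset.range n,
        ((1 - ENNReal.ofReal (w (i + 1)))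
          + ENNReal.ofReal (w (i + 1)) * g (i + 1) θ / ∫⁻ θ', g (i + 1) θ' ∂(F i))) := by
  intro n
  induction n with
  | zero => simp
  | succ n ih =>
    have hP : Measurable fun θ => ∏ i ∈ range n, ((1 - ENNReal.ofReal (w (i + 1)))
        + ENNReal.ofReal (w (i + 1)) * g (i + 1) θ / ∫⁻ θ', g (i + 1) θ' ∂(F i)) :=
      Finset.measurable_prod _ fun i _ =>
        measurable_const.add (((hg (i + 1)).const_mul _).div_const _)
    simp_rw [hrec n, prod_range_succ]
    -- keeps `rw [ih]` from rewriting the normalising constant, which the statement keeps in terms of `F n`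
    generalize ∫⁻ θ, g (n + 1) θ ∂F n = Z
    rw [ih, Measure.smul_withDensity_add_smul_withDensity_withDensity _ hP (hg _)]
    simp_rw [ENNReal.mul_div_right_comm]

/-- Explicit product form of the PR update: `dF_n/dF₀(θ) = ∏_{i=1}^n [(1-w_i) + w_i g_i(θ)/p_{i-1}(Y_i)]`,
where `g i θ = p_θ(Y_i)` and `p_{i-1}(Y_i) = ∫ g_i dF_{i-1}`. -/
theorem pr_product_form {Θ : Type*} [MeasurableSpace Θ]
    (F : ℕ → Measure Θ) (w : ℕ → ℝ) (g : ℕ → Θ → ℝ≥0∞)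
    (hg : ∀ i, Measurable (g i))
    (hw : ∀ i, 0 < w i ∧ w i < 1)
    (hpos : ∀ i, 0 < ∫⁻ θ, g (i + 1) θ ∂(F i))
    (hfin : ∀ i, ∫⁻ θ, g (i + 1) θ ∂(F i) < ∞)
    (hrec : ∀ i, F (i + 1)
      = (1 - ENNReal.ofReal (w (i + 1))) • F i
        + (ENNReal.ofReal (w (i + 1)) / ∫⁻ θ, g (i + 1) θ ∂(F i)) •
            (F i).withDensity (g (i + 1)))
    (h0 : IsProbabilityMeasure (F 0)) :
    ∀ n, F n = (F 0).withDensity (fun θ =>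
      ∏ i ∈ Finset.range n,
        ((1 - ENNReal.ofReal (w (i + 1)))
          + ENNReal.ofReal (w (i + 1)) * g (i + 1) θ / ∫⁻ θ', g (i + 1) θ' ∂(F i))) :=
  pr_product_form_general F w g hg hrec
end

section
/- General asymptotic optimality theorem: Suppose L(δ̂_n(y),θ) → L(δ_F(y),θ) a.s. for (μ×F)-a.a. (y,θ); there exist measurable h_n(y,θ) (possibly random) with h_n → h a.s. (μ×F)-a.e., L(δ̂_n(y),θ) ≤ h_n(y,θ) a.s. for all n and (μ×F)-a.a. (y,θ), and ∫∫ h_n(y,θ) p_θ(y) dF(θ) dμ(y) → ∫∫ h(y,θ) p_θ(y) dF(θ) dμ(y) < ∞ a.s. Then ρ_n(F) = ∫∫ L(δ̂_n(y),θ) p_θ(y) dF(θ) dμ(y) → ρ(F) = ∫∫ L(δ_F(y),θ) p_θ(y) dF(θ) dμ(y) almost surely. -/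
/-!
The Bayes risks are integrals over `μ × F` of the losses weighted by the density, so the theorem
is, for almost every realisation of the data, an instance of the generalized dominated
convergence theorem (Pratt's lemma). That lemma reduces to the ordinary one: the integrable
majorants `g n → g` with converging integrals converge in `L¹` (Scheffé), so truncating `f n` at
`g` changes its integral by a vanishing amount, and the truncations are dominated by `g`.
-/

open MeasureTheory Filter Topology

theorem sub_min_le_abs_sub_of_le {x y c : ℝ} (hxy : x ≤ y) : x - min x c ≤ |y - c| := by
  rcases le_total x c with h | h
  · rw [min_eq_left h, sub_self]; exact abs_nonneg _
  · rw [min_eq_right h]; exact (sub_le_sub_right hxy c).trans (le_abs_self _)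

section GeneralizedDominatedConvergence

variable {α : Type*} [MeasurableSpace α] {μ : Measure α}

theorem tendsto_integral_abs_sub_of_tendsto_integral {g : ℕ → α → ℝ} {g₀ : α → ℝ}
    (hg_int : ∀ n, Integrable (g n) μ) (hg₀_int : Integrable g₀ μ)
    (hg_nonneg : ∀ n, 0 ≤ᵐ[μ] g n)
    (hg_lim : ∀ᵐ a ∂μ, Tendsto (fun n => g n a) atTop (𝓝 (g₀ a)))
    (hg_int_lim : Tendsto (fun n => ∫ a, g n a ∂μ) atTop (𝓝 (∫ a, g₀ a ∂μ))) :
    Tendsto (fun n => ∫ a, |g n a - g₀ a| ∂μ) atTop (𝓝 0) := by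
  have hdeficit : Tendsto (fun n => ∫ a, max (g₀ a - g n a) 0 ∂μ) atTop (𝓝 0) := by
    have hDCT := tendsto_integral_of_dominated_convergence (f := fun _ => (0 : ℝ))
      (F := fun n a => max (g₀ a - g n a) 0) (fun a => |g₀ a|)
      (fun n => (hg₀_int.sub (hg_int n)).pos_part.aestronglyMeasurable) hg₀_int.abs
      (fun n => (hg_nonneg n).mono fun a (ha : 0 ≤ g n a) => by
        rw [Real.norm_of_nonneg (le_max_right _ _)]
        exact max_le (by linarith [le_abs_self (g₀ a)]) (abs_nonneg _))
      (hg_lim.mono fun a ha => by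
        simpa using ((tendsto_const_nhds (x := g₀ a)).sub ha).max
          (tendsto_const_nhds (x := (0 : ℝ))))
    simpa using hDCT
  have hsplit : ∀ n, ∫ a, |g n a - g₀ a| ∂μ
      = (∫ a, g n a ∂μ - ∫ a, g₀ a ∂μ) + 2 * ∫ a, max (g₀ a - g n a) 0 ∂μ := by
    intro n
    have habs : (fun a => |g n a - g₀ a|)
        = fun a => (g n a - g₀ a) + 2 * max (g₀ a - g n a) 0 := by
      ext a
      rcases le_total (g n a) (g₀ a) with h | h
      · rw [abs_of_nonpos (sub_nonpos.2 h), max_eq_left (sub_nonneg.2 h)]; ring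
      · rw [abs_of_nonneg (sub_nonneg.2 h), max_eq_right (sub_nonpos.2 h)]; ring
    have hdiff_int : Integrable (fun a => g n a - g₀ a) μ := (hg_int n).sub hg₀_int
    have hdeficit_int : Integrable (fun a => max (g₀ a - g n a) 0) μ :=
      (hg₀_int.sub (hg_int n)).pos_part
    rw [habs, integral_add hdiff_int (hdeficit_int.const_mul 2),
      integral_sub (hg_int n) hg₀_int, integral_const_mul]
  simp_rw [hsplit]
  simpa using (hg_int_lim.sub_const (∫ a, g₀ a ∂μ)).add (hdeficit.const_mul 2)

theorem tendsto_integral_of_generalized_dominated_convergence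
    {f g : ℕ → α → ℝ} {f₀ g₀ : α → ℝ}
    (hf_meas : ∀ n, AEStronglyMeasurable (f n) μ)
    (hg_int : ∀ n, Integrable (g n) μ) (hg₀_int : Integrable g₀ μ)
    (hf_nonneg : ∀ n, 0 ≤ᵐ[μ] f n) (hfg : ∀ n, f n ≤ᵐ[μ] g n)
    (hf_lim : ∀ᵐ a ∂μ, Tendsto (fun n => f n a) atTop (𝓝 (f₀ a)))
    (hg_lim : ∀ᵐ a ∂μ, Tendsto (fun n => g n a) atTop (𝓝 (g₀ a)))
    (hg_int_lim : Tendsto (fun n => ∫ a, g n a ∂μ) atTop (𝓝 (∫ a, g₀ a ∂μ))) :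
    Tendsto (fun n => ∫ a, f n a ∂μ) atTop (𝓝 (∫ a, f₀ a ∂μ)) := by
  have hpointwise : ∀ᵐ a ∂μ, (∀ n, 0 ≤ f n a ∧ f n a ≤ g n a) ∧
      Tendsto (fun n => f n a) atTop (𝓝 (f₀ a)) ∧ Tendsto (fun n => g n a) atTop (𝓝 (g₀ a)) :=
    (ae_all_iff.2 fun n => (hf_nonneg n).and (hfg n)).and (hf_lim.and hg_lim)
  have hg_nonneg : ∀ n, 0 ≤ᵐ[μ] g n := fun n =>
    hpointwise.mono fun a ha => (ha.1 n).1.trans (ha.1 n).2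
  have hg₀_nonneg : 0 ≤ᵐ[μ] g₀ := hpointwise.mono fun a ha =>
    ge_of_tendsto' ha.2.2 fun n => (ha.1 n).1.trans (ha.1 n).2
  have hf₀_le : f₀ ≤ᵐ[μ] g₀ := hpointwise.mono fun a ha =>
    le_of_tendsto_of_tendsto' ha.2.1 ha.2.2 fun n => (ha.1 n).2
  have hf_int : ∀ n, Integrable (f n) μ := fun n =>
    (hg_int n).mono' (hf_meas n) <| (hpointwise.mono fun a ha => by
      rw [Real.norm_of_nonneg (ha.1 n).1]; exact (ha.1 n).2)
  have htrunc_meas : ∀ n, AEStronglyMeasurable (fun a => min (f n a) (g₀ a)) μ := fun n =>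
    (hf_meas n).inf hg₀_int.aestronglyMeasurable
  have htrunc_le : ∀ n, ∀ᵐ a ∂μ, ‖min (f n a) (g₀ a)‖ ≤ g₀ a := fun n =>
    (hpointwise.and hg₀_nonneg).mono fun a ha => by
      rw [Real.norm_of_nonneg (le_min (ha.1.1 n).1 ha.2)]
      exact min_le_right _ _
  have htrunc_int : ∀ n, Integrable (fun a => min (f n a) (g₀ a)) μ := fun n =>
    hg₀_int.mono' (htrunc_meas n) (htrunc_le n)
  have htrunc : Tendsto (fun n => ∫ a, min (f n a) (g₀ a) ∂μ) atTop (𝓝 (∫ a, f₀ a ∂μ)) := by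
    have hDCT := tendsto_integral_of_dominated_convergence g₀ htrunc_meas hg₀_int htrunc_le
      (hpointwise.mono fun a ha => ha.2.1.min tendsto_const_nhds)
    rwa [integral_congr_ae (hf₀_le.mono fun a ha => min_eq_left ha)] at hDCT
  have hexcess : Tendsto (fun n => ∫ a, (f n a - min (f n a) (g₀ a)) ∂μ) atTop (𝓝 0) := by
    refine squeeze_zero (fun n => integral_nonneg fun a => sub_nonneg.2 (min_le_left _ _))
      (fun n => integral_mono_ae ((hf_int n).sub (htrunc_int n))
        ((hg_int n).sub hg₀_int).abs <|
          hpointwise.mono fun a ha => sub_min_le_abs_sub_of_le (ha.1 n).2)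
      (tendsto_integral_abs_sub_of_tendsto_integral hg_int hg₀_int hg_nonneg hg_lim hg_int_lim)
  have hsplit : ∀ n, ∫ a, f n a ∂μ
      = ∫ a, min (f n a) (g₀ a) ∂μ + ∫ a, (f n a - min (f n a) (g₀ a)) ∂μ := fun n => by
    rw [integral_sub (hf_int n) (htrunc_int n)]; ring
  simp_rw [hsplit]
  simpa using htrunc.add hexcess

end GeneralizedDominatedConvergence

theorem asymptotic_optimality_general_general {Ω Y Θ A : Type*}
    [MeasurableSpace Ω] [MeasurableSpace Y] [MeasurableSpace Θ]
    (P : Measure Ω)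
    (μ : Measure Y) (F : Measure Θ)
    (p : Θ → Y → ℝ) (hp : ∀ θ y, 0 ≤ p θ y)
    (L : A → Θ → ℝ) (hL : ∀ a θ, 0 ≤ L a θ)
    (δhat : ℕ → Ω → Y → A) (δF : Y → A)
    (h : Ω → Y × Θ → ℝ) (hn : ℕ → Ω → Y × Θ → ℝ)
    (hmeas : ∀ n ω, AEStronglyMeasurable
      (fun z : Y × Θ => L (δhat n ω z.1) z.2 * p z.2 z.1) (μ.prod F))
    (hconvL : ∀ᵐ ω ∂P, ∀ᵐ z : Y × Θ ∂(μ.prod F),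
      Tendsto (fun n => L (δhat n ω z.1) z.2) atTop (𝓝 (L (δF z.1) z.2)))
    (hconvh : ∀ᵐ ω ∂P, ∀ᵐ z : Y × Θ ∂(μ.prod F),
      Tendsto (fun n => hn n ω z) atTop (𝓝 (h ω z)))
    (hdom : ∀ᵐ ω ∂P, ∀ n, ∀ᵐ z : Y × Θ ∂(μ.prod F),
      L (δhat n ω z.1) z.2 ≤ hn n ω z)
    (hnint : ∀ᵐ ω ∂P, ∀ n, Integrable (fun z : Y × Θ => hn n ω z * p z.2 z.1) (μ.prod F))
    (hint : ∀ᵐ ω ∂P, Integrable (fun z : Y × Θ => h ω z * p z.2 z.1) (μ.prod F))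
    (hconvint : ∀ᵐ ω ∂P,
      Tendsto (fun n => ∫ z : Y × Θ, hn n ω z * p z.2 z.1 ∂(μ.prod F)) atTop
        (𝓝 (∫ z : Y × Θ, h ω z * p z.2 z.1 ∂(μ.prod F)))) :
    ∀ᵐ ω ∂P,
      Tendsto (fun n => ∫ z : Y × Θ, L (δhat n ω z.1) z.2 * p z.2 z.1 ∂(μ.prod F))
        atTop (𝓝 (∫ z : Y × Θ, L (δF z.1) z.2 * p z.2 z.1 ∂(μ.prod F))) := by
  filter_upwards [hconvL, hconvh, hdom, hnint, hint, hconvint] with ω hconvL hconvh hdom hnint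
    hint hconvint
  exact tendsto_integral_of_generalized_dominated_convergence (hmeas · ω) hnint hint
    (fun n => ae_of_all _ fun z => mul_nonneg (hL _ _) (hp _ _))
    (fun n => (hdom n).mono fun z hz => mul_le_mul_of_nonneg_right hz (hp _ _))
    (hconvL.mono fun z hz => hz.mul_const _) (hconvh.mono fun z hz => hz.mul_const _) hconvint

/-- General asymptotic optimality theorem (Theorem 1 of the paper): if the plug-in losses
converge a.s. `(μ×F)`-a.e. to the Bayes losses, and there are (possibly random) dominating
functions `h_n → h` with `L(δ̂_n(y),θ) ≤ h_n(y,θ)` and convergence of the `h_n`-integrals to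
a finite limit, then the empirical Bayes risk `ρ_n(F)` converges a.s. to the Bayes risk
`ρ(F)`. -/
theorem asymptotic_optimality_general {Ω Y Θ A : Type*}
    [MeasurableSpace Ω] [MeasurableSpace Y] [MeasurableSpace Θ]
    (P : Measure Ω) [IsProbabilityMeasure P]
    (μ : Measure Y) [SigmaFinite μ] (F : Measure Θ) [IsProbabilityMeasure F]
    (p : Θ → Y → ℝ) (hp : ∀ θ y, 0 ≤ p θ y)
    (L : A → Θ → ℝ) (hL : ∀ a θ, 0 ≤ L a θ)
    (δhat : ℕ → Ω → Y → A) (δF : Y → A)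
    (h : Ω → Y × Θ → ℝ) (hn : ℕ → Ω → Y × Θ → ℝ)
    (hmeas : ∀ n ω, AEStronglyMeasurable
      (fun z : Y × Θ => L (δhat n ω z.1) z.2 * p z.2 z.1) (μ.prod F))
    (hmeasF : AEStronglyMeasurable
      (fun z : Y × Θ => L (δF z.1) z.2 * p z.2 z.1) (μ.prod F))
    (hconvL : ∀ᵐ ω ∂P, ∀ᵐ z : Y × Θ ∂(μ.prod F),
      Tendsto (fun n => L (δhat n ω z.1) z.2) atTop (𝓝 (L (δF z.1) z.2)))
    (hconvh : ∀ᵐ ω ∂P, ∀ᵐ z : Y × Θ ∂(μ.prod F),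
      Tendsto (fun n => hn n ω z) atTop (𝓝 (h ω z)))
    (hdom : ∀ᵐ ω ∂P, ∀ n, ∀ᵐ z : Y × Θ ∂(μ.prod F),
      L (δhat n ω z.1) z.2 ≤ hn n ω z)
    (hnint : ∀ᵐ ω ∂P, ∀ n, Integrable (fun z : Y × Θ => hn n ω z * p z.2 z.1) (μ.prod F))
    (hint : ∀ᵐ ω ∂P, Integrable (fun z : Y × Θ => h ω z * p z.2 z.1) (μ.prod F))
    (hconvint : ∀ᵐ ω ∂P,
      Tendsto (fun n => ∫ z : Y × Θ, hn n ω z * p z.2 z.1 ∂(μ.prod F)) atTop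
        (𝓝 (∫ z : Y × Θ, h ω z * p z.2 z.1 ∂(μ.prod F)))) :
    ∀ᵐ ω ∂P,
      Tendsto (fun n => ∫ z : Y × Θ, L (δhat n ω z.1) z.2 * p z.2 z.1 ∂(μ.prod F))
        atTop (𝓝 (∫ z : Y × Θ, L (δF z.1) z.2 * p z.2 z.1 ∂(μ.prod F))) :=
  asymptotic_optimality_general_general P μ F p hp L hL δhat δF h hn hmeas hconvL hconvh hdom hnint
    hint hconvint
end
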